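/- arXiv:2310.02615 — 5 statements merged into one kernel-verified Lean document; each statement's English description precedes it below -/
import Mathlib

section
/- The function ζ(u) = (u⁴ − 20u² + 32 + u(u² − 8)√(u² − 24)) / (u⁴ − 18u² + u(u² − 6)√(u² − 24)), defined for u > 4√2, is strictly increasing on (4√2, ∞). -/
open Real

lemma zeta_sq_gt (u : ℝ) (hu : 4 * Real.sqrt 2 < u) : 32 < u ^ 2 := by
  have h2 : Real.sqrt 2 ^ 2 = 2 := Real.sq_sqrt (by norm_num)
  have hpos : (0:ℝ) < Real.sqrt 2 := Real.sqrt_pos.2 (by norm_num)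
  nlinarith [sq_nonneg (u - 4 * Real.sqrt 2),
    mul_pos hpos (sub_pos.2 hu)]

lemma zeta_eq (u : ℝ) (hu : 4 * Real.sqrt 2 < u) :
    (u ^ 4 - 20 * u ^ 2 + 32 + u * (u ^ 2 - 8) * Real.sqrt (u ^ 2 - 24)) /
      (u ^ 4 - 18 * u ^ 2 + u * (u ^ 2 - 6) * Real.sqrt (u ^ 2 - 24))
    = ((u + Real.sqrt (u ^ 2 - 24)) ^ 2 + 8) ^ 2 /
      ((u + Real.sqrt (u ^ 2 - 24)) ^ 2 * ((u + Real.sqrt (u ^ 2 - 24)) ^ 2 + 24)) := by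
  have h32 := zeta_sq_gt u hu
  have hu0 : 0 < u := lt_trans (by positivity) hu
  set s := Real.sqrt (u ^ 2 - 24) with hs_def
  have hs2 : s ^ 2 = u ^ 2 - 24 := Real.sq_sqrt (by linarith)
  have hs0 : 0 ≤ s := Real.sqrt_nonneg _
  have hD : 0 < u ^ 4 - 18 * u ^ 2 + u * (u ^ 2 - 6) * s := by
    nlinarith [mul_pos (show (0:ℝ) < u ^ 2 - 18 by linarith) (show (0:ℝ) < u ^ 2 by positivity),
      mul_nonneg (mul_nonneg hu0.le (show (0:ℝ) ≤ u ^ 2 - 6 by linarith)) hs0]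
  have hv : 4 * Real.sqrt 2 < u + s := lt_of_lt_of_le hu (by linarith)
  have hy32 := zeta_sq_gt (u + s) hv
  have hY : 0 < (u + s) ^ 2 * ((u + s) ^ 2 + 24) := by nlinarith
  rw [div_eq_div_iff hD.ne' hY.ne']
  linear_combination (32 * s ^ 2 + 80 * u * s - 2 * u * s ^ 3 + 80 * u ^ 2
    - 10 * u ^ 2 * s ^ 2 - 14 * u ^ 3 * s - 6 * u ^ 4) * hs2

/-- The auxiliary function ζ is strictly increasing on (4√2, ∞). -/
theorem zeta_strictMonoOn :
    StrictMonoOn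
      (fun u : ℝ =>
        (u ^ 4 - 20 * u ^ 2 + 32 + u * (u ^ 2 - 8) * Real.sqrt (u ^ 2 - 24)) /
          (u ^ 4 - 18 * u ^ 2 + u * (u ^ 2 - 6) * Real.sqrt (u ^ 2 - 24)))
      (Set.Ioi (4 * Real.sqrt 2)) := by
  intro a ha b hb hab
  simp only [Set.mem_Ioi] at ha hb
  have ha32 := zeta_sq_gt a ha
  have hb32 := zeta_sq_gt b hb
  have ha0 : 0 < a := lt_trans (by positivity) ha
  have hsa0 : 0 ≤ Real.sqrt (a ^ 2 - 24) := Real.sqrt_nonneg _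
  have hsb0 : 0 ≤ Real.sqrt (b ^ 2 - 24) := Real.sqrt_nonneg _
  have hsab : Real.sqrt (a ^ 2 - 24) ≤ Real.sqrt (b ^ 2 - 24) :=
    Real.sqrt_le_sqrt (by nlinarith)
  have hva : 4 * Real.sqrt 2 < a + Real.sqrt (a ^ 2 - 24) := lt_of_lt_of_le ha (by linarith)
  have hvb : 4 * Real.sqrt 2 < b + Real.sqrt (b ^ 2 - 24) := lt_of_lt_of_le hb (by linarith)
  have hvab : a + Real.sqrt (a ^ 2 - 24) < b + Real.sqrt (b ^ 2 - 24) := by linarith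
  have hya32 := zeta_sq_gt _ hva
  have hyb32 := zeta_sq_gt _ hvb
  have hyab : (a + Real.sqrt (a ^ 2 - 24)) ^ 2 < (b + Real.sqrt (b ^ 2 - 24)) ^ 2 := by
    have hva0 : 0 ≤ a + Real.sqrt (a ^ 2 - 24) := by linarith
    nlinarith
  simp only
  rw [zeta_eq a ha, zeta_eq b hb]
  set ya := (a + Real.sqrt (a ^ 2 - 24)) ^ 2
  set yb := (b + Real.sqrt (b ^ 2 - 24)) ^ 2
  have hYa : 0 < ya * (ya + 24) := by nlinarith
  have hYb : 0 < yb * (yb + 24) := by nlinarith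
  rw [div_lt_div_iff₀ hYa hYb]
  have hQ : 0 < 8 * ya * yb - 64 * ya - 64 * yb - 1536 := by
    nlinarith [mul_pos (show (0:ℝ) < ya - 32 by linarith) (show (0:ℝ) < yb - 32 by linarith)]
  nlinarith [mul_pos (show (0:ℝ) < yb - ya by linarith) hQ]
end

section
/- Let M > 0, H < 0, and L > 4√2·√(−H)·M. Set r₀ = (L² + L√(L² + 24HM²))/(−4HM) and ω₀(H, L) = −W(r₀; H, L), where W(r; H, L) = ½(L²/r² − 2H)(1 − 2M/r). Then ω₀(H, L) = H·ζ(L/(√(−H)·M)), where ζ(u) = (u⁴ − 20u² + 32 + u(u² − 8)√(u² − 24)) / (u⁴ − 18u² + u(u² − 6)√(u² − 24)). -/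
/-!
Write `H = -a²` and `L = u a M`. Then `√(L² + 24 H M²) = a M √(u² - 24)`, so the critical radius is
`M` times its value at `(M, H, L) = (1, -1, u)`, and under `r = M ρ` the potential picks up the
factor `a² = -H`. At `(1, -1, u)` the identity is rational in `u` and `t = √(u² - 24)`, and it
holds modulo `t² = u² - 24`.
-/

open Real

namespace Schwarzschild

noncomputable section

def effectivePotential (M H L r : ℝ) : ℝ := (1 / 2) * (L ^ 2 / r ^ 2 - 2 * H) * (1 - 2 * M / r)

def criticalRadius (M H L : ℝ) : ℝ :=
  (L ^ 2 + L * √(L ^ 2 + 24 * H * M ^ 2)) / (-4 * H * M)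

def zeta (u : ℝ) : ℝ :=
  (u ^ 4 - 20 * u ^ 2 + 32 + u * (u ^ 2 - 8) * √(u ^ 2 - 24)) /
    (u ^ 4 - 18 * u ^ 2 + u * (u ^ 2 - 6) * √(u ^ 2 - 24))

end

theorem effectivePotential_scale {M : ℝ} (hM : M ≠ 0) (a u ρ : ℝ) :
    effectivePotential M (-a ^ 2) (u * (a * M)) (M * ρ) =
      a ^ 2 * effectivePotential 1 (-1) u ρ := by
  unfold effectivePotential
  rcases eq_or_ne ρ 0 with rfl | hρ
  · simp
  · field_simp

theorem criticalRadius_scale {M a : ℝ} (hM : 0 < M) (ha : 0 < a) (u : ℝ) :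
    criticalRadius M (-a ^ 2) (u * (a * M)) = M * criticalRadius 1 (-1) u := by
  have hsqrt : √((u * (a * M)) ^ 2 + 24 * -a ^ 2 * M ^ 2) = a * M * √(u ^ 2 - 24) := by
    rw [show (u * (a * M)) ^ 2 + 24 * -a ^ 2 * M ^ 2 = (a * M) ^ 2 * (u ^ 2 - 24) by ring,
      sqrt_mul (by positivity), sqrt_sq (by positivity)]
  rw [criticalRadius, criticalRadius, hsqrt]
  field_simp
  ring_nf

theorem criticalRadius_one_neg_one (u : ℝ) :
    criticalRadius 1 (-1) u = (u ^ 2 + u * √(u ^ 2 - 24)) / 4 := by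
  rw [criticalRadius, show u ^ 2 + 24 * -1 * 1 ^ 2 = u ^ 2 - 24 by ring]
  ring

theorem effectivePotential_criticalRadius_one_neg_one {u : ℝ} (hu : 0 ≤ u) (hu24 : 24 ≤ u ^ 2) :
    effectivePotential 1 (-1) u (criticalRadius 1 (-1) u) = zeta u := by
  have hu0 : 0 < u := by nlinarith
  have ht : √(u ^ 2 - 24) ^ 2 = u ^ 2 - 24 := sq_sqrt (by linarith)
  have ht0 := sqrt_nonneg (u ^ 2 - 24)
  rw [criticalRadius_one_neg_one, effectivePotential, zeta]
  generalize √(u ^ 2 - 24) = t at ht ht0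
  have hut : u + t ≠ 0 := by positivity
  have hden : u * (u ^ 2 - 18) + t * (u ^ 2 - 6) ≠ 0 := by nlinarith [mul_nonneg hu0.le ht0]
  field_simp
  linear_combination (4 * u * t ^ 2 + 32 * t - 4 * u ^ 3 + 96 * u) * ht

end Schwarzschild

open Schwarzschild in
/-- Homogeneity identity: ω₀(H, L) = H ζ(L/(√(−H) M)), where ω₀ is the opposite of
the minimum value of the Schwarzschild effective potential. -/
theorem schwarzschild_omega0_homogeneity
    (M H L : ℝ) (hM : 0 < M) (hH : H < 0)
    (hL : 4 * Real.sqrt 2 * Real.sqrt (-H) * M < L) :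
    -((1 / 2) * (L ^ 2 / ((L ^ 2 + L * Real.sqrt (L ^ 2 + 24 * H * M ^ 2)) / (-4 * H * M)) ^ 2
          - 2 * H) *
        (1 - 2 * M / ((L ^ 2 + L * Real.sqrt (L ^ 2 + 24 * H * M ^ 2)) / (-4 * H * M)))) =
    H * ((fun u : ℝ =>
        (u ^ 4 - 20 * u ^ 2 + 32 + u * (u ^ 2 - 8) * Real.sqrt (u ^ 2 - 24)) /
          (u ^ 4 - 18 * u ^ 2 + u * (u ^ 2 - 6) * Real.sqrt (u ^ 2 - 24)))
      (L / (Real.sqrt (-H) * M))) := by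
  show -effectivePotential M H L (criticalRadius M H L) = H * zeta (L / (√(-H) * M))
  have ha : 0 < √(-H) := sqrt_pos.2 (neg_pos.2 hH)
  have hHa : H = -√(-H) ^ 2 := by rw [sq_sqrt (neg_pos.2 hH).le]; ring
  generalize √(-H) = a at ha hHa hL ⊢
  subst hHa
  obtain ⟨u, rfl⟩ : ∃ u, L = u * (a * M) := ⟨L / (a * M), by field_simp⟩
  have hu : 4 * √2 < u := lt_of_mul_lt_mul_right (by linarith) (by positivity : 0 ≤ a * M)
  have hu0 : 0 < u := lt_trans (by positivity) hu
  have hu24 : 24 ≤ u ^ 2 := by nlinarith [sq_sqrt (zero_le_two (α := ℝ)), sqrt_nonneg 2]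
  rw [mul_div_cancel_right₀ u (by positivity), criticalRadius_scale hM ha,
    effectivePotential_scale hM.ne', effectivePotential_criticalRadius_one_neg_one hu0.le hu24]
  ring
end

section
/- Let M > 0, H < 0, L > 4√2·√(−H)·M, and r₀ = (L² + L√(L² + 24HM²))/(−4HM). Then 0 < W(r₀; H, L) < −H, where W(r; H, L) = ½(L²/r² − 2H)(1 − 2M/r). -/
open Real

/-- The minimum value of the Schwarzschild effective potential satisfies
0 < W(r₀; H, L) < −H. -/
theorem schwarzschild_min_value_bounds
    (M H L : ℝ) (hM : 0 < M) (hH : H < 0)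
    (hL : 4 * Real.sqrt 2 * Real.sqrt (-H) * M < L) :
    0 < (1 / 2) * (L ^ 2 / ((L ^ 2 + L * Real.sqrt (L ^ 2 + 24 * H * M ^ 2)) / (-4 * H * M)) ^ 2
          - 2 * H) *
        (1 - 2 * M / ((L ^ 2 + L * Real.sqrt (L ^ 2 + 24 * H * M ^ 2)) / (-4 * H * M))) ∧
    (1 / 2) * (L ^ 2 / ((L ^ 2 + L * Real.sqrt (L ^ 2 + 24 * H * M ^ 2)) / (-4 * H * M)) ^ 2
          - 2 * H) *
        (1 - 2 * M / ((L ^ 2 + L * Real.sqrt (L ^ 2 + 24 * H * M ^ 2)) / (-4 * H * M))) < -H := by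
  have hHpos : 0 < -H := by linarith
  have hsH : 0 < Real.sqrt (-H) := Real.sqrt_pos.mpr hHpos
  have hs2pos : 0 < Real.sqrt 2 := Real.sqrt_pos.mpr (by norm_num)
  have hLpos : 0 < L := lt_trans (by positivity) hL
  have hL2 : 32 * (-H) * M ^ 2 < L ^ 2 := by
    have h1 : (4 * Real.sqrt 2 * Real.sqrt (-H) * M) ^ 2 < L ^ 2 := by
      apply pow_lt_pow_left₀ hL (by positivity)
      norm_num
    have h2 : (Real.sqrt 2) ^ 2 = 2 := Real.sq_sqrt (by norm_num)
    have h3 : (Real.sqrt (-H)) ^ 2 = -H := Real.sq_sqrt (le_of_lt hHpos)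
    have heq : (4 * Real.sqrt 2 * Real.sqrt (-H) * M) ^ 2 = 32 * (-H) * M ^ 2 := by
      rw [mul_pow, mul_pow, mul_pow, h2, h3]; ring
    linarith [heq ▸ h1]
  set s := Real.sqrt (L ^ 2 + 24 * H * M ^ 2) with hs_def
  have harg : 0 < L ^ 2 + 24 * H * M ^ 2 := by nlinarith
  have hs2 : s ^ 2 = L ^ 2 + 24 * H * M ^ 2 := Real.sq_sqrt (le_of_lt harg)
  have hs_pos : 0 < s := Real.sqrt_pos.mpr harg
  have hs_lt : s < L := by
    have h6 : s < Real.sqrt (L ^ 2) := Real.sqrt_lt_sqrt (le_of_lt harg) (by nlinarith [mul_pos hM hM])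
    rwa [Real.sqrt_sq hLpos.le] at h6
  set r := (L ^ 2 + L * s) / (-4 * H * M) with hr_def
  have hdenom : 0 < -4 * H * M := by nlinarith
  have hnum : 0 < L ^ 2 + L * s := by positivity
  have hr_pos : 0 < r := div_pos hnum hdenom
  have h4 : r * (-4 * H * M) = L ^ 2 + L * s :=
    div_mul_cancel₀ _ (ne_of_gt hdenom)
  have hr_gt : 2 * M < r := by
    rw [hr_def, lt_div_iff₀ hdenom]
    nlinarith
  have hfac1 : 0 < L ^ 2 / r ^ 2 - 2 * H := by
    have : 0 < L ^ 2 / r ^ 2 := by positivity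
    linarith
  have hfac2 : 0 < 1 - 2 * M / r := by
    have : 2 * M / r < 1 := (div_lt_one hr_pos).mpr hr_gt
    linarith
  constructor
  · positivity
  · have h5 : -4 * H * M * r ^ 2 = r * (L ^ 2 + L * s) := by
      rw [← h4]; ring
    have key : L ^ 2 * (r - 2 * M) < -4 * H * M * r ^ 2 := by
      rw [h5]
      nlinarith [mul_pos hr_pos (mul_pos hLpos hs_pos), mul_pos hM (mul_pos hLpos hLpos)]
    have hrw : (1 / 2) * (L ^ 2 / r ^ 2 - 2 * H) * (1 - 2 * M / r)
        = (L ^ 2 * (r - 2 * M) - 2 * H * r ^ 2 * (r - 2 * M)) / (2 * r ^ 3) := by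
      field_simp
    rw [hrw, div_lt_iff₀ (by positivity)]
    nlinarith [key]
end

section
/- Let M > 0 and L > 2√6·M. Define Ω(x) = W(1/x; −1/2, L) + ω₀, where W(r; −1/2, L) = ½(L²/r² + 1)(1 − 2M/r) and ω₀ is chosen so that Ω vanishes at x₀ = 1/r₀ with r₀ the minimum point of W. Then the second derivative of Ω at x₀ equals M²·(L/M)·√((L/M)² − 12), the third derivative equals −6M³·(L/M)², and the fourth derivative equals 0. -/
open Real

/-!
In the variable `x = 1/r` the potential `Ω` is the cubic `−M L² x³ + (L²/2) x² − M x + const`,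
so `Ω'' x = L² (1 − 6 M x)`, `Ω''' = −6 M L²` and `Ω'''' = 0`. With `s = √(L² − 12 M²)` the
inverse radius of the circular orbit is `x₀ = 2M / (L (L + s))`, and `s² = L² − 12 M²` gives
`L² (1 − 6 M x₀) = L s`.
-/

section Cubic

variable (a b c d : ℝ)

theorem deriv_cubic :
    deriv (fun x : ℝ => a * x ^ 3 + b * x ^ 2 + c * x + d) =
      fun x => 3 * a * x ^ 2 + 2 * b * x + c := by
  funext x
  have h : HasDerivAt (fun x : ℝ => a * x ^ 3 + b * x ^ 2 + c * x + d)
      (3 * a * x ^ 2 + 2 * b * x + c) x := by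
    refine ((((hasDerivAt_pow 3 x).const_mul a).add ((hasDerivAt_pow 2 x).const_mul b)).add
      ((hasDerivAt_id' x).const_mul c)).add_const d |>.congr_deriv ?_
    norm_num
    ring
  exact h.deriv

theorem deriv_quadratic :
    deriv (fun x : ℝ => a * x ^ 2 + b * x + c) = fun x => 2 * a * x + b := by
  funext x
  have h : HasDerivAt (fun x : ℝ => a * x ^ 2 + b * x + c) (2 * a * x + b) x := by
    refine (((hasDerivAt_pow 2 x).const_mul a).add ((hasDerivAt_id' x).const_mul b)).add_const c
      |>.congr_deriv ?_
    norm_num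
    ring
  exact h.deriv

theorem deriv_linear : deriv (fun x : ℝ => a * x + b) = fun _ => a := by
  funext x
  rw [(((hasDerivAt_id' x).const_mul a).add_const b).deriv, mul_one]

theorem iteratedDeriv_two_cubic :
    iteratedDeriv 2 (fun x : ℝ => a * x ^ 3 + b * x ^ 2 + c * x + d) =
      fun x => 6 * a * x + 2 * b := by
  rw [iteratedDeriv_succ, iteratedDeriv_one, deriv_cubic, deriv_quadratic]
  ring_nf

theorem iteratedDeriv_three_cubic :
    iteratedDeriv 3 (fun x : ℝ => a * x ^ 3 + b * x ^ 2 + c * x + d) = fun _ => 6 * a := by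
  rw [iteratedDeriv_succ, iteratedDeriv_two_cubic, deriv_linear]

theorem iteratedDeriv_four_cubic :
    iteratedDeriv 4 (fun x : ℝ => a * x ^ 3 + b * x ^ 2 + c * x + d) = 0 := by
  rw [iteratedDeriv_succ, iteratedDeriv_three_cubic, deriv_const']
  rfl

end Cubic

theorem sqrt_div_sq_sub {M : ℝ} (hM : 0 < M) (L k : ℝ) :
    √((L / M) ^ 2 - k) = √(L ^ 2 - k * M ^ 2) / M := by
  rw [show (L / M) ^ 2 - k = (L ^ 2 - k * M ^ 2) / M ^ 2 by field_simp,
    Real.sqrt_div' _ (by positivity), Real.sqrt_sq hM.le]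

theorem sq_mul_one_sub_six_mul_one_div_div {M L s : ℝ} (hL : L ≠ 0) (hLs : L + s ≠ 0)
    (hs : s ^ 2 = L ^ 2 - 12 * M ^ 2) :
    L ^ 2 * (1 - 6 * M * (1 / ((L ^ 2 + L * s) / (2 * M)))) = L * s := by
  rw [one_div_div, show L ^ 2 + L * s = L * (L + s) by ring]
  field_simp
  linear_combination (-1) * hs

/-- Derivatives at the minimum of the inverted-radius Schwarzschild effective potential
at energy H = −1/2: the second derivative equals M²(L/M)√((L/M)² − 12), the third equals
−6M³(L/M)², and the fourth vanishes. -/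
theorem schwarzschild_inverted_potential_derivs
    (M L : ℝ) (hM : 0 < M) (hL : 2 * Real.sqrt 6 * M < L) :
    iteratedDeriv 2
        (fun x : ℝ => (1 / 2) * (L ^ 2 * x ^ 2 + 1) * (1 - 2 * M * x) -
          ((1 / 2) * (L ^ 2 / ((L ^ 2 + L * Real.sqrt (L ^ 2 - 12 * M ^ 2)) / (2 * M)) ^ 2 + 1) *
            (1 - 2 * M / ((L ^ 2 + L * Real.sqrt (L ^ 2 - 12 * M ^ 2)) / (2 * M)))))
        (1 / ((L ^ 2 + L * Real.sqrt (L ^ 2 - 12 * M ^ 2)) / (2 * M))) =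
      M ^ 2 * (L / M) * Real.sqrt ((L / M) ^ 2 - 12) ∧
    iteratedDeriv 3
        (fun x : ℝ => (1 / 2) * (L ^ 2 * x ^ 2 + 1) * (1 - 2 * M * x) -
          ((1 / 2) * (L ^ 2 / ((L ^ 2 + L * Real.sqrt (L ^ 2 - 12 * M ^ 2)) / (2 * M)) ^ 2 + 1) *
            (1 - 2 * M / ((L ^ 2 + L * Real.sqrt (L ^ 2 - 12 * M ^ 2)) / (2 * M)))))
        (1 / ((L ^ 2 + L * Real.sqrt (L ^ 2 - 12 * M ^ 2)) / (2 * M))) =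
      -6 * M ^ 3 * (L / M) ^ 2 ∧
    iteratedDeriv 4
        (fun x : ℝ => (1 / 2) * (L ^ 2 * x ^ 2 + 1) * (1 - 2 * M * x) -
          ((1 / 2) * (L ^ 2 / ((L ^ 2 + L * Real.sqrt (L ^ 2 - 12 * M ^ 2)) / (2 * M)) ^ 2 + 1) *
            (1 - 2 * M / ((L ^ 2 + L * Real.sqrt (L ^ 2 - 12 * M ^ 2)) / (2 * M)))))
        (1 / ((L ^ 2 + L * Real.sqrt (L ^ 2 - 12 * M ^ 2)) / (2 * M))) = 0 := by
  set s := √(L ^ 2 - 12 * M ^ 2)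
  set ω₀ := (1 / 2) * (L ^ 2 / ((L ^ 2 + L * s) / (2 * M)) ^ 2 + 1) *
      (1 - 2 * M / ((L ^ 2 + L * s) / (2 * M)))
  set x₀ := 1 / ((L ^ 2 + L * s) / (2 * M))
  have hL0 : 0 < L := lt_trans (by positivity) hL
  have hdisc : 0 ≤ L ^ 2 - 12 * M ^ 2 := by
    have : √6 ^ 2 = 6 := Real.sq_sqrt (by norm_num)
    nlinarith [mul_self_lt_mul_self (by positivity) hL]
  have hΩ : (fun x : ℝ => (1 / 2) * (L ^ 2 * x ^ 2 + 1) * (1 - 2 * M * x) - ω₀) =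
      fun x => -(M * L ^ 2) * x ^ 3 + L ^ 2 / 2 * x ^ 2 + -M * x + (1 / 2 - ω₀) := by
    funext x; ring
  rw [hΩ, iteratedDeriv_two_cubic, iteratedDeriv_three_cubic, iteratedDeriv_four_cubic,
    sqrt_div_sq_sub hM]
  refine ⟨?_, by field_simp, rfl⟩
  have hLs : L + s ≠ 0 := by positivity
  calc 6 * -(M * L ^ 2) * x₀ + 2 * (L ^ 2 / 2) = L ^ 2 * (1 - 6 * M * x₀) := by ring
    _ = L * s := sq_mul_one_sub_six_mul_one_div_div hL0.ne' hLs (Real.sq_sqrt hdisc)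
    _ = M ^ 2 * (L / M) * (s / M) := by field_simp
end

section
/- If Ω is C⁴ near x₀ with Ω(x₀) = Ω'(x₀) = 0 and Ω''(x₀) > 0, and h(x) = sgn(x − x₀)·√(Ω(x)), then h extends to a C³ function near x₀ with h'(x₀) = √(Ω''(x₀))/√2, h''(x₀) = Ω'''(x₀)/(3√2·√(Ω''(x₀))), and h'''(x₀) = (3Ω''(x₀)Ω⁗(x₀) − (Ω'''(x₀))²)/(12√2·(Ω''(x₀))^{3/2}). -/
open Real

set_option maxHeartbeats 1000000

open Filter Asymptotics Topology Set


noncomputable def SSP (x₀ p q r w v : ℝ) : ℝ → ℝ :=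
  fun y => p + q*(y-x₀) + r*(y-x₀)^2/2 + w*(y-x₀)^3/6 + v*(y-x₀)^4/24

lemma SSP_self (x₀ p q r w v : ℝ) : SSP x₀ p q r w v x₀ = p := by simp [SSP]

lemma hasDerivAt_SSP (x₀ p q r w v x : ℝ) :
    HasDerivAt (SSP x₀ p q r w v) (SSP x₀ q r w v 0 x) x := by
  have h1 : HasDerivAt (fun y : ℝ => y - x₀) 1 x := (hasDerivAt_id x).sub_const x₀
  have h2 := h1.pow 2
  have h3 := h1.pow 3
  have h4 := h1.pow 4
  have := ((((hasDerivAt_const x p).add (h1.const_mul q)).add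
      ((h2.const_mul r).div_const 2)).add ((h3.const_mul w).div_const 6)).add
      ((h4.const_mul v).div_const 24)
  refine this.congr_deriv ?_
  simp [SSP]; ring

lemma isLittleO_step {x₀ : ℝ} {f f' : ℝ → ℝ} {n : ℕ} (h0 : f x₀ = 0)
    (hd : ∀ᶠ x in 𝓝 x₀, HasDerivAt f (f' x) x)
    (ho : f' =o[𝓝 x₀] fun x => (x - x₀) ^ n) :
    f =o[𝓝 x₀] fun x => (x - x₀) ^ (n + 1) := by
  rw [isLittleO_iff] at ho ⊢
  intro ε hε
  obtain ⟨δ, hδ, hball⟩ := Metric.eventually_nhds_iff_ball.mp (hd.and (ho hε))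
  rw [Metric.eventually_nhds_iff_ball]
  refine ⟨δ, hδ, fun x hx => ?_⟩
  have hseg : segment ℝ x₀ x ⊆ Metric.ball x₀ δ :=
    (convex_ball x₀ δ).segment_subset (Metric.mem_ball_self hδ) hx
  have hbound : ∀ y ∈ segment ℝ x₀ x, ‖f' y‖ ≤ ε * |x - x₀| ^ n := by
    intro y hy
    have h1 := (hball y (hseg hy)).2
    have h2 : |y - x₀| ≤ |x - x₀| := by
      obtain ⟨s, t, hs, ht, hst, rfl⟩ := hy
      have : s • x₀ + t • x - x₀ = t * (x - x₀) := by
        have : s = 1 - t := by linarith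
        subst this; simp [smul_eq_mul]; ring
      rw [this, abs_mul, abs_of_nonneg ht]
      nlinarith [abs_nonneg (x - x₀), abs_nonneg (t*(x-x₀))]
    calc ‖f' y‖ ≤ ε * ‖(y - x₀) ^ n‖ := h1
    _ = ε * |y - x₀| ^ n := by rw [norm_pow]; rfl
    _ ≤ ε * |x - x₀| ^ n := by gcongr
  have key := (convex_segment x₀ x).norm_image_sub_le_of_norm_hasDerivWithin_le
    (fun y hy => ((hball y (hseg hy)).1).hasDerivWithinAt) hbound
    (left_mem_segment ℝ x₀ x) (right_mem_segment ℝ x₀ x)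
  rw [h0, sub_zero] at key
  calc ‖f x‖ ≤ ε * |x - x₀| ^ n * ‖x - x₀‖ := key
  _ = ε * ‖(x - x₀) ^ (n+1)‖ := by
      rw [norm_pow]; show _ = ε * |x - x₀|^(n+1); rw [Real.norm_eq_abs]; ring

noncomputable def SSps (Ω : ℝ → ℝ) (x₀ : ℝ) : ℝ → ℝ := fun x =>
  if x = x₀ then deriv (deriv Ω) x₀ / 2 else Ω x / (x - x₀)^2

noncomputable def SSps1 (Ω : ℝ → ℝ) (x₀ : ℝ) : ℝ → ℝ := fun x =>
  if x = x₀ then deriv (deriv (deriv Ω)) x₀ / 6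
  else deriv Ω x / (x - x₀)^2 - 2 * Ω x / (x - x₀)^3

noncomputable def SSps2 (Ω : ℝ → ℝ) (x₀ : ℝ) : ℝ → ℝ := fun x =>
  if x = x₀ then deriv (deriv (deriv (deriv Ω))) x₀ / 12
  else deriv (deriv Ω) x / (x - x₀)^2 - 4 * deriv Ω x / (x - x₀)^3 + 6 * Ω x / (x - x₀)^4

noncomputable def SSps3 (Ω : ℝ → ℝ) (x₀ : ℝ) : ℝ → ℝ := fun x =>
  deriv (deriv (deriv Ω)) x / (x - x₀)^2 - 6 * deriv (deriv Ω) x / (x - x₀)^3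
    + 18 * deriv Ω x / (x - x₀)^4 - 24 * Ω x / (x - x₀)^5

theorem SScore (Ω : ℝ → ℝ) (x₀ : ℝ) (hΩ : ContDiffAt ℝ 4 Ω x₀) (h0 : Ω x₀ = 0)
    (h1 : deriv Ω x₀ = 0) :
    ∃ U : Set ℝ, IsOpen U ∧ x₀ ∈ U ∧
      (∀ x ∈ U, HasDerivAt (SSps Ω x₀) (SSps1 Ω x₀ x) x) ∧
      (∀ x ∈ U, HasDerivAt (SSps1 Ω x₀) (SSps2 Ω x₀ x) x) ∧
      (∀ x ∈ U, x ≠ x₀ → HasDerivAt (SSps2 Ω x₀) (SSps3 Ω x₀ x) x) ∧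
      ContinuousOn (SSps2 Ω x₀) U ∧
      ContinuousOn (SSps3 Ω x₀) (U \ {x₀}) ∧
      Tendsto (fun x => (x - x₀) * SSps3 Ω x₀ x) (𝓝[≠] x₀) (𝓝 0) := by
  obtain ⟨u, hu, hcdu⟩ := hΩ.contDiffOn le_rfl (by simp)
  set U := interior u with hUdef
  have hU : IsOpen U := isOpen_interior
  have hx₀ : x₀ ∈ U := mem_interior_iff_mem_nhds.mpr hu
  have hcd : ContDiffOn ℝ 4 Ω U := hcdu.mono interior_subset
  rw [show (4:WithTop ℕ∞) = 3+1 by norm_num, contDiffOn_succ_iff_deriv_of_isOpen hU] at hcd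
  have hcd3 := hcd.2.2
  rw [show (3:WithTop ℕ∞) = 2+1 by norm_num, contDiffOn_succ_iff_deriv_of_isOpen hU] at hcd3
  have hcd2 := hcd3.2.2
  rw [show (2:WithTop ℕ∞) = 1+1 by norm_num, contDiffOn_succ_iff_deriv_of_isOpen hU] at hcd2
  have hcd1 := hcd2.2.2
  rw [show (1:WithTop ℕ∞) = 0+1 by norm_num, contDiffOn_succ_iff_deriv_of_isOpen hU] at hcd1
  have hdΩ : ∀ x ∈ U, HasDerivAt Ω (deriv Ω x) x := fun x hx =>
    ((hcd.1 x hx).differentiableAt (hU.mem_nhds hx)).hasDerivAt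
  have hd1 : ∀ x ∈ U, HasDerivAt (deriv Ω) (deriv (deriv Ω) x) x := fun x hx =>
    ((hcd3.1 x hx).differentiableAt (hU.mem_nhds hx)).hasDerivAt
  have hd2 : ∀ x ∈ U, HasDerivAt (deriv (deriv Ω)) (deriv (deriv (deriv Ω)) x) x := fun x hx =>
    ((hcd2.1 x hx).differentiableAt (hU.mem_nhds hx)).hasDerivAt
  have hd3 : ∀ x ∈ U, HasDerivAt (deriv (deriv (deriv Ω)))
      (deriv (deriv (deriv (deriv Ω))) x) x := fun x hx =>
    ((hcd1.1 x hx).differentiableAt (hU.mem_nhds hx)).hasDerivAt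
  set a := deriv (deriv Ω) x₀ with hadef
  set b := deriv (deriv (deriv Ω)) x₀ with hbdef
  set c := deriv (deriv (deriv (deriv Ω))) x₀ with hcdef
  -- Taylor errors
  have e4 : (fun x => deriv (deriv (deriv Ω)) x - SSP x₀ b c 0 0 0 x)
      =o[𝓝 x₀] fun x => (x - x₀)^1 := by
    have h := hd3 x₀ hx₀
    rw [hasDerivAt_iff_isLittleO] at h
    refine h.congr' (Eventually.of_forall fun x => ?_) (Eventually.of_forall fun x => ?_)
    · simp only [SSP, smul_eq_mul]; ring
    · simp
  have e3 : (fun x => deriv (deriv Ω) x - SSP x₀ a b c 0 0 x)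
      =o[𝓝 x₀] fun x => (x - x₀)^2 := by
    apply isLittleO_step (f' := fun x => deriv (deriv (deriv Ω)) x - SSP x₀ b c 0 0 0 x)
    · rw [SSP_self]; simp [hadef]
    · filter_upwards [hU.mem_nhds hx₀] with x hx
      exact (hd2 x hx).sub (hasDerivAt_SSP x₀ a b c 0 0 x)
    · exact e4
  have e2 : (fun x => deriv Ω x - SSP x₀ 0 a b c 0 x)
      =o[𝓝 x₀] fun x => (x - x₀)^3 := by
    apply isLittleO_step (f' := fun x => deriv (deriv Ω) x - SSP x₀ a b c 0 0 x)
    · rw [SSP_self]; simp [h1]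
    · filter_upwards [hU.mem_nhds hx₀] with x hx
      exact (hd1 x hx).sub (hasDerivAt_SSP x₀ 0 a b c 0 x)
    · exact e3
  have e1 : (fun x => Ω x - SSP x₀ 0 0 a b c x)
      =o[𝓝 x₀] fun x => (x - x₀)^4 := by
    apply isLittleO_step (f' := fun x => deriv Ω x - SSP x₀ 0 a b c 0 x)
    · rw [SSP_self]; simp [h0]
    · filter_upwards [hU.mem_nhds hx₀] with x hx
      exact (hdΩ x hx).sub (hasDerivAt_SSP x₀ 0 0 a b c x)
    · exact e2
  have t1 : Tendsto (fun x => (Ω x - SSP x₀ 0 0 a b c x)/(x-x₀)^4) (𝓝[≠] x₀) (𝓝 0) :=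
    e1.tendsto_div_nhds_zero.mono_left nhdsWithin_le_nhds
  have t2 : Tendsto (fun x => (deriv Ω x - SSP x₀ 0 a b c 0 x)/(x-x₀)^3) (𝓝[≠] x₀) (𝓝 0) :=
    e2.tendsto_div_nhds_zero.mono_left nhdsWithin_le_nhds
  have t3 : Tendsto (fun x => (deriv (deriv Ω) x - SSP x₀ a b c 0 0 x)/(x-x₀)^2)
      (𝓝[≠] x₀) (𝓝 0) :=
    e3.tendsto_div_nhds_zero.mono_left nhdsWithin_le_nhds
  have t4 : Tendsto (fun x => (deriv (deriv (deriv Ω)) x - SSP x₀ b c 0 0 0 x)/(x-x₀)^1)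
      (𝓝[≠] x₀) (𝓝 0) :=
    e4.tendsto_div_nhds_zero.mono_left nhdsWithin_le_nhds
  have ts : Tendsto (fun x : ℝ => x - x₀) (𝓝[≠] x₀) (𝓝 0) := by
    have : Tendsto (fun x : ℝ => x - x₀) (𝓝 x₀) (𝓝 (x₀ - x₀)) :=
      (continuous_id.sub continuous_const).tendsto x₀
    simpa using this.mono_left nhdsWithin_le_nhds
  have hsne : ∀ᶠ x in 𝓝[≠] x₀, x ≠ x₀ := by
    filter_upwards [self_mem_nhdsWithin] with x hx; exact hx
  -- L1
  have L1 : Tendsto (fun x => (SSps Ω x₀ x - a/2)/(x-x₀)) (𝓝[≠] x₀) (𝓝 (b/6)) := by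
    have TT : Tendsto (fun x => b/6 + c/24*(x-x₀)
        + (Ω x - SSP x₀ 0 0 a b c x)/(x-x₀)^4 * (x-x₀)) (𝓝[≠] x₀)
        (𝓝 (b/6 + c/24*0 + 0*0)) :=
      (tendsto_const_nhds.add (tendsto_const_nhds.mul ts)).add (t1.mul ts)
    rw [show b/6 + c/24*0 + 0*0 = b/6 by ring] at TT
    refine TT.congr' ?_
    filter_upwards [hsne] with x hx
    have hs : x - x₀ ≠ 0 := sub_ne_zero.mpr hx
    simp only [SSps, if_neg hx, SSP]
    field_simp
    ring
  have L3 : Tendsto (fun x => (SSps1 Ω x₀ x - b/6)/(x-x₀)) (𝓝[≠] x₀) (𝓝 (c/12)) := by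
    have TT : Tendsto (fun x => c/12 + (deriv Ω x - SSP x₀ 0 a b c 0 x)/(x-x₀)^3
        - 2*((Ω x - SSP x₀ 0 0 a b c x)/(x-x₀)^4)) (𝓝[≠] x₀)
        (𝓝 (c/12 + 0 - 2*0)) :=
      (tendsto_const_nhds.add t2).sub (t1.const_mul 2)
    rw [show c/12 + 0 - 2*0 = c/12 by ring] at TT
    refine TT.congr' ?_
    filter_upwards [hsne] with x hx
    have hs : x - x₀ ≠ 0 := sub_ne_zero.mpr hx
    simp only [SSps1, if_neg hx, SSP]
    field_simp
    ring
  have L4 : Tendsto (SSps2 Ω x₀) (𝓝[≠] x₀) (𝓝 (c/12)) := by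
    have TT : Tendsto (fun x => c/12 + (deriv (deriv Ω) x - SSP x₀ a b c 0 0 x)/(x-x₀)^2
        - 4*((deriv Ω x - SSP x₀ 0 a b c 0 x)/(x-x₀)^3)
        + 6*((Ω x - SSP x₀ 0 0 a b c x)/(x-x₀)^4)) (𝓝[≠] x₀)
        (𝓝 (c/12 + 0 - 4*0 + 6*0)) :=
      ((tendsto_const_nhds.add t3).sub (t2.const_mul 4)).add (t1.const_mul 6)
    rw [show c/12 + 0 - 4*0 + 6*0 = c/12 by ring] at TT
    refine TT.congr' ?_
    filter_upwards [hsne] with x hx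
    have hs : x - x₀ ≠ 0 := sub_ne_zero.mpr hx
    simp only [SSps2, if_neg hx, SSP]
    field_simp
    ring
  have L5 : Tendsto (fun x => (x - x₀) * SSps3 Ω x₀ x) (𝓝[≠] x₀) (𝓝 0) := by
    have TT : Tendsto (fun x =>
        (deriv (deriv (deriv Ω)) x - SSP x₀ b c 0 0 0 x)/(x-x₀)^1
        - 6*((deriv (deriv Ω) x - SSP x₀ a b c 0 0 x)/(x-x₀)^2)
        + 18*((deriv Ω x - SSP x₀ 0 a b c 0 x)/(x-x₀)^3)
        - 24*((Ω x - SSP x₀ 0 0 a b c x)/(x-x₀)^4)) (𝓝[≠] x₀)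
        (𝓝 (0 - 6*0 + 18*0 - 24*0)) :=
      ((t4.sub (t3.const_mul 6)).add (t2.const_mul 18)).sub (t1.const_mul 24)
    rw [show (0:ℝ) - 6*0 + 18*0 - 24*0 = 0 by ring] at TT
    refine TT.congr' ?_
    filter_upwards [hsne] with x hx
    have hs : x - x₀ ≠ 0 := sub_ne_zero.mpr hx
    simp only [SSps3, SSP]
    field_simp
    ring
  -- derivative of SSps
  have hps : ∀ x ∈ U, HasDerivAt (SSps Ω x₀) (SSps1 Ω x₀ x) x := by
    intro x hx
    rcases eq_or_ne x x₀ with rfl|hne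
    · rw [hasDerivAt_iff_tendsto_slope]
      have hv : SSps1 Ω x x = b/6 := by simp [SSps1, hbdef]
      rw [hv]
      refine L1.congr' ?_
      filter_upwards [hsne] with y hy
      rw [slope_def_field]
      have h2' : SSps Ω x x = a/2 := by simp [SSps, hadef]
      rw [h2']
    · have hs : x - x₀ ≠ 0 := sub_ne_zero.mpr hne
      have hdd : HasDerivAt (fun y => Ω y / (y - x₀)^2)
          ((deriv Ω x * (x-x₀)^2 - Ω x * (2*(x-x₀)^1*1)) / ((x-x₀)^2)^2) x :=
        (hdΩ x hx).div (((hasDerivAt_id x).sub_const x₀).pow 2) (pow_ne_zero 2 hs)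
      have heq : SSps Ω x₀ =ᶠ[𝓝 x] fun y => Ω y / (y - x₀)^2 := by
        filter_upwards [eventually_ne_nhds hne] with y hy
        simp [SSps, if_neg hy]
      have := hdd.congr_of_eventuallyEq heq
      refine this.congr_deriv ?_
      simp only [SSps1, if_neg hne]
      field_simp
  -- derivative of SSps1
  have hps1 : ∀ x ∈ U, HasDerivAt (SSps1 Ω x₀) (SSps2 Ω x₀ x) x := by
    intro x hx
    rcases eq_or_ne x x₀ with rfl|hne
    · rw [hasDerivAt_iff_tendsto_slope]
      have hv : SSps2 Ω x x = c/12 := by simp [SSps2, hcdef]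
      rw [hv]
      refine L3.congr' ?_
      filter_upwards [hsne] with y hy
      rw [slope_def_field]
      have h2' : SSps1 Ω x x = b/6 := by simp [SSps1, hbdef]
      rw [h2']
    · have hs : x - x₀ ≠ 0 := sub_ne_zero.mpr hne
      have hA : HasDerivAt (fun y => deriv Ω y / (y - x₀)^2)
          ((deriv (deriv Ω) x * (x-x₀)^2 - deriv Ω x * (2*(x-x₀)^1*1)) / ((x-x₀)^2)^2) x :=
        (hd1 x hx).div (((hasDerivAt_id x).sub_const x₀).pow 2) (pow_ne_zero 2 hs)
      have hB : HasDerivAt (fun y => 2 * Ω y / (y - x₀)^3)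
          (((2 * deriv Ω x) * (x-x₀)^3 - 2 * Ω x * (3*(x-x₀)^2*1)) / ((x-x₀)^3)^2) x := by
        have := ((hdΩ x hx).const_mul 2).div
          (((hasDerivAt_id x).sub_const x₀).pow 3) (pow_ne_zero 3 hs)
        exact this.congr_deriv (by simp only [id_eq, Pi.pow_apply]; ring)
      have hdd := hA.sub hB
      have heq : SSps1 Ω x₀ =ᶠ[𝓝 x] fun y => deriv Ω y / (y - x₀)^2 - 2 * Ω y / (y - x₀)^3 := by
        filter_upwards [eventually_ne_nhds hne] with y hy
        simp [SSps1, if_neg hy]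
      have := hdd.congr_of_eventuallyEq heq
      refine this.congr_deriv ?_
      simp only [SSps2, if_neg hne]
      field_simp
      ring
  -- derivative of SSps2 away from x₀
  have hps2 : ∀ x ∈ U, x ≠ x₀ → HasDerivAt (SSps2 Ω x₀) (SSps3 Ω x₀ x) x := by
    intro x hx hne
    have hs : x - x₀ ≠ 0 := sub_ne_zero.mpr hne
    have hA : HasDerivAt (fun y => deriv (deriv Ω) y / (y - x₀)^2)
        ((deriv (deriv (deriv Ω)) x * (x-x₀)^2 - deriv (deriv Ω) x * (2*(x-x₀)^1*1))
          / ((x-x₀)^2)^2) x :=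
      (hd2 x hx).div (((hasDerivAt_id x).sub_const x₀).pow 2) (pow_ne_zero 2 hs)
    have hB : HasDerivAt (fun y => 4 * deriv Ω y / (y - x₀)^3)
        (((4 * deriv (deriv Ω) x) * (x-x₀)^3 - 4 * deriv Ω x * (3*(x-x₀)^2*1))
          / ((x-x₀)^3)^2) x := by
      have := ((hd1 x hx).const_mul 4).div
        (((hasDerivAt_id x).sub_const x₀).pow 3) (pow_ne_zero 3 hs)
      exact this.congr_deriv (by simp only [id_eq, Pi.pow_apply]; ring)
    have hC : HasDerivAt (fun y => 6 * Ω y / (y - x₀)^4)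
        (((6 * deriv Ω x) * (x-x₀)^4 - 6 * Ω x * (4*(x-x₀)^3*1)) / ((x-x₀)^4)^2) x := by
      have := ((hdΩ x hx).const_mul 6).div
        (((hasDerivAt_id x).sub_const x₀).pow 4) (pow_ne_zero 4 hs)
      exact this.congr_deriv (by simp only [id_eq, Pi.pow_apply]; ring)
    have hdd := (hA.sub hB).add hC
    have heq : SSps2 Ω x₀ =ᶠ[𝓝 x] fun y =>
        deriv (deriv Ω) y / (y - x₀)^2 - 4 * deriv Ω y / (y - x₀)^3 + 6 * Ω y / (y - x₀)^4 := by
      filter_upwards [eventually_ne_nhds hne] with y hy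
      simp [SSps2, if_neg hy]
    have := hdd.congr_of_eventuallyEq heq
    refine this.congr_deriv ?_
    simp only [SSps3]
    field_simp
    ring
  -- continuity of SSps2 on U
  have hps2c : ContinuousOn (SSps2 Ω x₀) U := by
    intro x hx
    rcases eq_or_ne x x₀ with rfl|hne
    · have hT : Tendsto (SSps2 Ω x) (𝓝 x) (𝓝 (SSps2 Ω x x)) := by
        rw [← nhdsNE_sup_pure x]
        rw [tendsto_sup]
        constructor
        · have h2' : SSps2 Ω x x = c/12 := by simp [SSps2, hcdef]
          rw [h2']; exact L4
        · exact tendsto_pure_nhds _ _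
      exact (ContinuousAt.continuousWithinAt hT)
    · exact ((hps2 x hx hne).continuousAt).continuousWithinAt
  have hps3c : ContinuousOn (SSps3 Ω x₀) (U \ {x₀}) := by
    intro x hx
    obtain ⟨hxU, hxne⟩ := hx
    have hxne' : x ≠ x₀ := hxne
    have hs : x - x₀ ≠ 0 := sub_ne_zero.mpr hxne'
    apply ContinuousAt.continuousWithinAt
    have c0 : ContinuousAt Ω x := (hdΩ x hxU).continuousAt
    have c1 : ContinuousAt (deriv Ω) x := (hd1 x hxU).continuousAt
    have c2 : ContinuousAt (deriv (deriv Ω)) x := (hd2 x hxU).continuousAt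
    have c3 : ContinuousAt (deriv (deriv (deriv Ω))) x := (hd3 x hxU).continuousAt
    have cp : ∀ k : ℕ, ContinuousAt (fun y : ℝ => (y - x₀)^k) x := fun k =>
      ((continuous_id.sub continuous_const).pow k).continuousAt
    exact (((c3.div (cp 2) (pow_ne_zero 2 hs)).sub
        ((continuousAt_const.mul c2).div (cp 3) (pow_ne_zero 3 hs))).add
        ((continuousAt_const.mul c1).div (cp 4) (pow_ne_zero 4 hs))).sub
        ((continuousAt_const.mul c0).div (cp 5) (pow_ne_zero 5 hs))
  exact ⟨U, hU, hx₀, hps, hps1, hps2, hps2c, hps3c, L5⟩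


lemma SSsign_mul_abs (a : ℝ) : Real.sign a * |a| = a := by
  rcases lt_trichotomy a 0 with h|rfl|h
  · rw [Real.sign_of_neg h, abs_of_neg h]; ring
  · simp
  · rw [Real.sign_of_pos h, abs_of_pos h]; ring

lemma SSalg1 (A : ℝ) (hA : 0 < A) : Real.sqrt (A/2) = Real.sqrt A / Real.sqrt 2 :=
  Real.sqrt_div hA.le 2

lemma SSalg2' (B r t : ℝ) (hr : r ≠ 0) (ht : t ≠ 0) (ht2 : t^2 = 2) :
    2*((B/6)/(2*(r/t))) = B/(3*t*r) := by
  field_simp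
  linear_combination (3*B) * ht2

lemma SSalg2 (A B : ℝ) (hA : 0 < A) :
    2*((B/6)/(2*Real.sqrt (A/2))) = B/(3*Real.sqrt 2*Real.sqrt A) := by
  rw [SSalg1 A hA]
  exact SSalg2' B _ _ (Real.sqrt_pos.mpr hA).ne' (Real.sqrt_pos.mpr (by norm_num)).ne'
    (Real.sq_sqrt (by norm_num))

lemma SSalg3' (B C r t : ℝ) (hr : r ≠ 0) (ht : t ≠ 0) (ht2 : t^2 = 2) :
    3*((C/12)/(2*(r/t)) - (B/6)^2/(4*(r/t)^3)) = (3*r^2*C - B^2)/(12*t*(r^2*r)) := by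
  have ht4 : t^4 = 4 := by rw [show 4 = 2+2 by norm_num, pow_add, ht2]; norm_num
  field_simp
  ring_nf
  rw [ht2, ht4]
  ring

lemma SSalg3 (A B C : ℝ) (hA : 0 < A) :
    3*((C/12)/(2*Real.sqrt (A/2)) - (B/6)^2/(4*(Real.sqrt (A/2))^3)) =
      (3*A*C - B^2)/(12*Real.sqrt 2*A^((3:ℝ)/2)) := by
  obtain ⟨r, hr0, rfl⟩ : ∃ r : ℝ, 0 < r ∧ r^2 = A :=
    ⟨Real.sqrt A, Real.sqrt_pos.mpr hA, Real.sq_sqrt hA.le⟩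
  have h1 : Real.sqrt (r^2/2) = r/Real.sqrt 2 := by
    rw [Real.sqrt_div (sq_nonneg r) 2, Real.sqrt_sq hr0.le]
  have hrp : (r^2)^((3:ℝ)/2) = r^2*r := by
    rw [show (3:ℝ)/2 = 1 + 1/2 by norm_num, Real.rpow_add (by positivity), Real.rpow_one,
      ← Real.sqrt_eq_rpow, Real.sqrt_sq hr0.le]
  rw [h1, hrp]
  exact SSalg3' B C r _ hr0.ne' (Real.sqrt_pos.mpr (by norm_num)).ne'
    (Real.sq_sqrt (by norm_num))


lemma SSts (x₀ : ℝ) : Filter.Tendsto (fun x : ℝ => x - x₀) (𝓝[≠] x₀) (𝓝 0) := by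
  have : Filter.Tendsto (fun x : ℝ => x - x₀) (𝓝 x₀) (𝓝 (x₀ - x₀)) :=
    (continuous_id.sub continuous_const).tendsto x₀
  simpa using this.mono_left nhdsWithin_le_nhds

lemma SSgluing (x₀ : ℝ) (φ φ1 φ2 φ3 : ℝ → ℝ) (V : Set ℝ) (hV : IsOpen V) (hx₀ : x₀ ∈ V)
    (hdφ : ∀ x ∈ V, HasDerivAt φ (φ1 x) x)
    (hdφ1 : ∀ x ∈ V, HasDerivAt φ1 (φ2 x) x)
    (hdφ2 : ∀ x ∈ V, x ≠ x₀ → HasDerivAt φ2 (φ3 x) x)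
    (hφ2c : ContinuousOn φ2 V)
    (hφ3c : ContinuousOn φ3 (V \ {x₀}))
    (hK : Tendsto (fun x => (x - x₀) * φ3 x) (𝓝[≠] x₀) (𝓝 0)) :
    ContDiffAt ℝ 3 (fun x => (x - x₀) * φ x) x₀ ∧
    deriv (fun x => (x - x₀) * φ x) x₀ = φ x₀ ∧
    iteratedDeriv 2 (fun x => (x - x₀) * φ x) x₀ = 2 * φ1 x₀ ∧
    iteratedDeriv 3 (fun x => (x - x₀) * φ x) x₀ = 3 * φ2 x₀ := by
  have hVn : V ∈ 𝓝 x₀ := hV.mem_nhds hx₀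
  have hsne : ∀ᶠ x in 𝓝[≠] x₀, x ≠ x₀ := by
    filter_upwards [self_mem_nhdsWithin] with x hx; exact hx
  have hdg : ∀ x ∈ V, HasDerivAt (fun y => (y - x₀) * φ y) (φ x + (x - x₀) * φ1 x) x := by
    intro x hx
    have h := ((hasDerivAt_id x).sub_const x₀).mul (hdφ x hx)
    refine h.congr_deriv ?_
    simp only [id_eq]
    ring
  have hdg1 : ∀ x ∈ V, HasDerivAt (fun y => φ y + (y - x₀) * φ1 y)
      (2 * φ1 x + (x - x₀) * φ2 x) x := by
    intro x hx
    have h := (hdφ x hx).add (((hasDerivAt_id x).sub_const x₀).mul (hdφ1 x hx))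
    refine h.congr_deriv ?_
    simp only [id_eq]
    ring
  set G3 : ℝ → ℝ := fun x => if x = x₀ then 3 * φ2 x₀ else 3 * φ2 x + (x - x₀) * φ3 x
    with hG3def
  have hdg2 : ∀ x ∈ V, HasDerivAt (fun y => 2 * φ1 y + (y - x₀) * φ2 y) (G3 x) x := by
    intro x hx
    rcases eq_or_ne x x₀ with rfl|hne
    · have hval : G3 x = 3 * φ2 x := by rw [hG3def]; simp
      rw [hval, hasDerivAt_iff_tendsto_slope]
      have hφ2x : ContinuousAt φ2 x := hφ2c.continuousAt (hV.mem_nhds hx)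
      have h1 := hdφ1 x hx
      rw [hasDerivAt_iff_tendsto_slope] at h1
      have TT : Tendsto (fun y => 2 * slope φ1 x y + φ2 y) (𝓝[≠] x)
          (𝓝 (2 * φ2 x + φ2 x)) :=
        (h1.const_mul 2).add (hφ2x.tendsto.mono_left nhdsWithin_le_nhds)
      rw [show 2 * φ2 x + φ2 x = 3 * φ2 x by ring] at TT
      refine TT.congr' ?_
      filter_upwards [hsne] with y hy
      have hs : y - x ≠ 0 := sub_ne_zero.mpr hy
      rw [slope_def_field, slope_def_field]
      field_simp
      ring
    · have h := ((hdφ1 x hx).const_mul 2).add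
        (((hasDerivAt_id x).sub_const x₀).mul (hdφ2 x hx hne))
      have hval : G3 x = 3 * φ2 x + (x - x₀) * φ3 x := by rw [hG3def]; simp [hne]
      rw [hval]
      refine h.congr_deriv ?_
      simp only [id_eq]
      ring
  have hG3c : ContinuousOn G3 V := by
    intro x hx
    rcases eq_or_ne x x₀ with rfl|hne
    · apply ContinuousAt.continuousWithinAt
      have hval : G3 x = 3 * φ2 x := by rw [hG3def]; simp
      show Tendsto G3 (𝓝 x) (𝓝 (G3 x))
      rw [← nhdsNE_sup_pure x, tendsto_sup]
      constructor
      · rw [hval]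
        have hφ2x : ContinuousAt φ2 x := hφ2c.continuousAt (hV.mem_nhds hx)
        have T1 : Tendsto (fun y => 3 * φ2 y) (𝓝[≠] x) (𝓝 (3 * φ2 x)) :=
          (hφ2x.tendsto.mono_left nhdsWithin_le_nhds).const_mul 3
        have TT := T1.add hK
        rw [add_zero] at TT
        refine TT.congr' ?_
        filter_upwards [hsne] with y hy
        rw [hG3def]
        simp [hy]
      · exact tendsto_pure_nhds _ _
    · apply ContinuousAt.continuousWithinAt
      have hev : (fun y => 3 * φ2 y + (y - x₀) * φ3 y) =ᶠ[𝓝 x] G3 := by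
        filter_upwards [eventually_ne_nhds hne] with y hy
        rw [hG3def]; simp [hy]
      have hφ2x : ContinuousAt φ2 x := hφ2c.continuousAt (hV.mem_nhds hx)
      have hφ3x : ContinuousAt φ3 x := by
        have hop : IsOpen (V \ {x₀}) := hV.sdiff isClosed_singleton
        exact hφ3c.continuousAt (hop.mem_nhds ⟨hx, hne⟩)
      have hct : ContinuousAt (fun y => 3 * φ2 y + (y - x₀) * φ3 y) x :=
        (continuousAt_const.mul hφ2x).add
          (((continuous_id.sub continuous_const).continuousAt).mul hφ3x)
      exact hct.congr hev
  have hCD : ContDiffOn ℝ 3 (fun y => (y - x₀) * φ y) V := by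
    rw [show (3 : WithTop ℕ∞) = 2 + 1 by norm_num, contDiffOn_succ_iff_deriv_of_isOpen hV]
    refine ⟨fun x hx => ((hdg x hx).differentiableAt).differentiableWithinAt,
      by intro h; exact absurd h (by norm_num), ?_⟩
    apply ContDiffOn.congr (f := fun x => φ x + (x - x₀) * φ1 x) ?_
      (fun x hx => (hdg x hx).deriv)
    rw [show (2 : WithTop ℕ∞) = 1 + 1 by norm_num, contDiffOn_succ_iff_deriv_of_isOpen hV]
    refine ⟨fun x hx => ((hdg1 x hx).differentiableAt).differentiableWithinAt,
      by intro h; exact absurd h (by norm_num), ?_⟩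
    apply ContDiffOn.congr (f := fun x => 2 * φ1 x + (x - x₀) * φ2 x) ?_
      (fun x hx => (hdg1 x hx).deriv)
    rw [show (1 : WithTop ℕ∞) = 0 + 1 by norm_num, contDiffOn_succ_iff_deriv_of_isOpen hV]
    refine ⟨fun x hx => ((hdg2 x hx).differentiableAt).differentiableWithinAt,
      by intro h; exact absurd h (by norm_num), ?_⟩
    rw [contDiffOn_zero]
    exact ContinuousOn.congr hG3c (fun x hx => (hdg2 x hx).deriv)
  have hev : deriv (fun y => (y - x₀) * φ y) =ᶠ[𝓝 x₀] fun x => φ x + (x - x₀) * φ1 x := by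
    filter_upwards [hVn] with x hx; exact (hdg x hx).deriv
  have hev1 : deriv (deriv (fun y => (y - x₀) * φ y)) =ᶠ[𝓝 x₀]
      fun x => 2 * φ1 x + (x - x₀) * φ2 x := by
    refine hev.deriv.trans ?_
    filter_upwards [hVn] with x hx; exact (hdg1 x hx).deriv
  refine ⟨hCD.contDiffAt hVn, ?_, ?_, ?_⟩
  · rw [(hdg x₀ hx₀).deriv]; simp
  · rw [iteratedDeriv_succ, iteratedDeriv_one, hev.deriv_eq, (hdg1 x₀ hx₀).deriv]
    simp
  · rw [show (3:ℕ) = 2 + 1 from rfl, iteratedDeriv_succ, iteratedDeriv_succ,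
      iteratedDeriv_one, hev1.deriv_eq, (hdg2 x₀ hx₀).deriv, hG3def]
    simp

lemma SSsqrt (x₀ : ℝ) (p p1 p2 p3 : ℝ → ℝ) (V : Set ℝ) (hV : IsOpen V) (hx₀ : x₀ ∈ V)
    (hpos : ∀ x ∈ V, 0 < p x)
    (hd : ∀ x ∈ V, HasDerivAt p (p1 x) x)
    (hd1 : ∀ x ∈ V, HasDerivAt p1 (p2 x) x)
    (hd2 : ∀ x ∈ V, x ≠ x₀ → HasDerivAt p2 (p3 x) x)
    (hc2 : ContinuousOn p2 V)
    (hc3 : ContinuousOn p3 (V \ {x₀}))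
    (hL : Tendsto (fun x => (x - x₀) * p3 x) (𝓝[≠] x₀) (𝓝 0)) :
    ContDiffAt ℝ 3 (fun x => (x - x₀) * Real.sqrt (p x)) x₀ ∧
    deriv (fun x => (x - x₀) * Real.sqrt (p x)) x₀ = Real.sqrt (p x₀) ∧
    iteratedDeriv 2 (fun x => (x - x₀) * Real.sqrt (p x)) x₀
      = 2 * (p1 x₀ / (2 * Real.sqrt (p x₀))) ∧
    iteratedDeriv 3 (fun x => (x - x₀) * Real.sqrt (p x)) x₀
      = 3 * (p2 x₀ / (2 * Real.sqrt (p x₀)) - (p1 x₀)^2 / (4 * (Real.sqrt (p x₀))^3)) := by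
  have hr : ∀ x ∈ V, 0 < Real.sqrt (p x) := fun x hx => Real.sqrt_pos.mpr (hpos x hx)
  have hrc : ∀ x ∈ V, ContinuousAt (fun y => Real.sqrt (p y)) x := fun x hx =>
    Real.continuous_sqrt.continuousAt.comp ((hd x hx).continuousAt)
  have hdr : ∀ x ∈ V, HasDerivAt (fun y => Real.sqrt (p y))
      (p1 x / (2 * Real.sqrt (p x))) x := by
    intro x hx
    have h := (Real.hasDerivAt_sqrt (hpos x hx).ne').comp x (hd x hx)
    refine h.congr_deriv ?_
    ring
  have hdf1 : ∀ x ∈ V, HasDerivAt (fun y => p1 y / (2 * Real.sqrt (p y)))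
      (p2 x / (2 * Real.sqrt (p x)) - (p1 x)^2 / (4 * (Real.sqrt (p x))^3)) x := by
    intro x hx
    have hrx := (hr x hx).ne'
    have h := (hd1 x hx).div ((hdr x hx).const_mul 2)
      (mul_ne_zero (by norm_num) hrx)
    refine h.congr_deriv ?_
    field_simp
    ring
  have hdf2 : ∀ x ∈ V, x ≠ x₀ → HasDerivAt
      (fun y => p2 y / (2 * Real.sqrt (p y)) - (p1 y)^2 / (4 * (Real.sqrt (p y))^3))
      (p3 x / (2 * Real.sqrt (p x)) - 3 * p1 x * p2 x / (4 * (Real.sqrt (p x))^3)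
        + 3 * (p1 x)^3 / (8 * (Real.sqrt (p x))^5)) x := by
    intro x hx hne
    have hrx := (hr x hx).ne'
    have hA := (hd2 x hx hne).div ((hdr x hx).const_mul 2) (mul_ne_zero (by norm_num) hrx)
    have hB := ((hd1 x hx).pow 2).div (((hdr x hx).pow 3).const_mul 4)
      (mul_ne_zero (by norm_num) (pow_ne_zero 3 hrx))
    have h := hA.sub hB
    refine h.congr_deriv ?_
    simp only [Pi.pow_apply]
    field_simp
    ring
  have hf2c : ContinuousOn (fun y => p2 y / (2 * Real.sqrt (p y))
      - (p1 y)^2 / (4 * (Real.sqrt (p y))^3)) V := by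
    intro x hx
    have hrx := (hr x hx).ne'
    apply ContinuousAt.continuousWithinAt
    exact ((hc2.continuousAt (hV.mem_nhds hx)).div
        (continuousAt_const.mul (hrc x hx)) (mul_ne_zero (by norm_num) hrx)).sub
      ((((hd1 x hx).continuousAt).pow 2).div
        (continuousAt_const.mul ((hrc x hx).pow 3))
        (mul_ne_zero (by norm_num) (pow_ne_zero 3 hrx)))
  have hf3c : ContinuousOn (fun y => p3 y / (2 * Real.sqrt (p y))
      - 3 * p1 y * p2 y / (4 * (Real.sqrt (p y))^3)
      + 3 * (p1 y)^3 / (8 * (Real.sqrt (p y))^5)) (V \ {x₀}) := by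
    intro x hx
    obtain ⟨hxV, hxne⟩ := hx
    have hrx := (hr x hxV).ne'
    apply ContinuousAt.continuousWithinAt
    have hop : IsOpen (V \ {x₀}) := hV.sdiff isClosed_singleton
    have hc3x : ContinuousAt p3 x := hc3.continuousAt (hop.mem_nhds ⟨hxV, hxne⟩)
    exact ((hc3x.div (continuousAt_const.mul (hrc x hxV))
        (mul_ne_zero (by norm_num) hrx)).sub
      (((continuousAt_const.mul ((hd1 x hxV).continuousAt)).mul
        (hc2.continuousAt (hV.mem_nhds hxV))).div
        (continuousAt_const.mul ((hrc x hxV).pow 3))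
        (mul_ne_zero (by norm_num) (pow_ne_zero 3 hrx)))).add
      ((continuousAt_const.mul (((hd1 x hxV).continuousAt).pow 3)).div
        (continuousAt_const.mul ((hrc x hxV).pow 5))
        (mul_ne_zero (by norm_num) (pow_ne_zero 5 hrx)))
  have hK : Tendsto (fun x => (x - x₀) * (p3 x / (2 * Real.sqrt (p x))
      - 3 * p1 x * p2 x / (4 * (Real.sqrt (p x))^3)
      + 3 * (p1 x)^3 / (8 * (Real.sqrt (p x))^5))) (𝓝[≠] x₀) (𝓝 0) := by
    have hr0 := (hr x₀ hx₀).ne'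
    have hI : Tendsto (fun x => 1 / (2 * Real.sqrt (p x))) (𝓝[≠] x₀)
        (𝓝 (1 / (2 * Real.sqrt (p x₀)))) :=
      ((continuousAt_const.div (continuousAt_const.mul (hrc x₀ hx₀))
        (mul_ne_zero (by norm_num) hr0)).tendsto).mono_left nhdsWithin_le_nhds
    have hJ : Tendsto (fun x => -(3 * p1 x * p2 x) / (4 * (Real.sqrt (p x))^3)
        + 3 * (p1 x)^3 / (8 * (Real.sqrt (p x))^5)) (𝓝[≠] x₀)
        (𝓝 (-(3 * p1 x₀ * p2 x₀) / (4 * (Real.sqrt (p x₀))^3)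
          + 3 * (p1 x₀)^3 / (8 * (Real.sqrt (p x₀))^5))) := by
      refine (ContinuousAt.tendsto ?_).mono_left nhdsWithin_le_nhds
      exact ((((continuousAt_const.mul ((hd1 x₀ hx₀).continuousAt)).mul
          (hc2.continuousAt (hV.mem_nhds hx₀))).neg).div
          (continuousAt_const.mul ((hrc x₀ hx₀).pow 3))
          (mul_ne_zero (by norm_num) (pow_ne_zero 3 hr0))).add
        ((continuousAt_const.mul (((hd1 x₀ hx₀).continuousAt).pow 3)).div
          (continuousAt_const.mul ((hrc x₀ hx₀).pow 5))
          (mul_ne_zero (by norm_num) (pow_ne_zero 5 hr0)))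
    have TT := (hL.mul hI).add ((SSts x₀).mul hJ)
    rw [zero_mul, zero_mul, zero_add] at TT
    refine TT.congr' ?_
    have hVe : ∀ᶠ x in 𝓝[≠] x₀, x ∈ V := nhdsWithin_le_nhds (hV.mem_nhds hx₀)
    filter_upwards [hVe] with x hxV
    have hrx := (hr x hxV).ne'
    field_simp
    ring
  exact SSgluing x₀ (fun y => Real.sqrt (p y)) _ _ _ V hV hx₀ hdr hdf1 hdf2 hf2c hf3c hK

/-- The signed square root h(x) = sgn(x − x₀)√(Ω(x)) of a C⁴ function Ω with a
non-degenerate zero minimum at x₀ extends to a C³ function near x₀, whose first three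
derivatives at x₀ are √(Ω''(x₀))/√2, Ω'''(x₀)/(3√2√(Ω''(x₀))), and
(3Ω''(x₀)Ω⁗(x₀) − (Ω'''(x₀))²)/(12√2 (Ω''(x₀))^{3/2}). -/
theorem signed_sqrt_C3_extension
    (Ω : ℝ → ℝ) (x₀ : ℝ)
    (hΩ : ContDiffAt ℝ 4 Ω x₀)
    (h0 : Ω x₀ = 0) (h1 : deriv Ω x₀ = 0)
    (h2 : 0 < iteratedDeriv 2 Ω x₀)
    (hpos : ∀ᶠ x in nhdsWithin x₀ {x₀}ᶜ, 0 < Ω x) :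
    ∃ g : ℝ → ℝ, ContDiffAt ℝ 3 g x₀ ∧
      (∀ᶠ x in nhds x₀, g x = Real.sign (x - x₀) * Real.sqrt (Ω x)) ∧
      deriv g x₀ = Real.sqrt (iteratedDeriv 2 Ω x₀) / Real.sqrt 2 ∧
      iteratedDeriv 2 g x₀ =
        iteratedDeriv 3 Ω x₀ / (3 * Real.sqrt 2 * Real.sqrt (iteratedDeriv 2 Ω x₀)) ∧
      iteratedDeriv 3 g x₀ =
        (3 * iteratedDeriv 2 Ω x₀ * iteratedDeriv 4 Ω x₀ - (iteratedDeriv 3 Ω x₀) ^ 2) /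
          (12 * Real.sqrt 2 * (iteratedDeriv 2 Ω x₀) ^ ((3 : ℝ) / 2)) := by
  have id2 : iteratedDeriv 2 Ω = deriv (deriv Ω) := by
    rw [iteratedDeriv_succ, iteratedDeriv_one]
  have id3 : iteratedDeriv 3 Ω = deriv (deriv (deriv Ω)) := by
    rw [iteratedDeriv_succ, iteratedDeriv_succ, iteratedDeriv_one]
  have id4 : iteratedDeriv 4 Ω = deriv (deriv (deriv (deriv Ω))) := by
    rw [iteratedDeriv_succ, iteratedDeriv_succ, iteratedDeriv_succ, iteratedDeriv_one]
  rw [id2] at h2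
  obtain ⟨U, hU, hx₀U, hps, hps1, hps2, hps2c, hps3c, L5⟩ := SScore Ω x₀ hΩ h0 h1
  have hpsc : ContinuousOn (SSps Ω x₀) U := fun x hx =>
    ((hps x hx).continuousAt).continuousWithinAt
  have hVopen : IsOpen (U ∩ SSps Ω x₀ ⁻¹' Set.Ioi 0) :=
    hpsc.isOpen_inter_preimage hU isOpen_Ioi
  have hps00 : SSps Ω x₀ x₀ = deriv (deriv Ω) x₀ / 2 := by simp [SSps]
  have hx₀V : x₀ ∈ U ∩ SSps Ω x₀ ⁻¹' Set.Ioi 0 :=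
    ⟨hx₀U, by simp only [Set.mem_preimage, Set.mem_Ioi, hps00]; linarith⟩
  obtain ⟨hc3g, hder, hit2, hit3⟩ := SSsqrt x₀ (SSps Ω x₀) (SSps1 Ω x₀) (SSps2 Ω x₀)
    (SSps3 Ω x₀) _ hVopen hx₀V (fun x hx => hx.2) (fun x hx => hps x hx.1)
    (fun x hx => hps1 x hx.1) (fun x hx hne => hps2 x hx.1 hne)
    (hps2c.mono Set.inter_subset_left)
    (hps3c.mono (fun y hy => ⟨hy.1.1, hy.2⟩)) L5
  have e1 : SSps1 Ω x₀ x₀ = deriv (deriv (deriv Ω)) x₀ / 6 := by simp [SSps1]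
  have e2 : SSps2 Ω x₀ x₀ = deriv (deriv (deriv (deriv Ω))) x₀ / 12 := by simp [SSps2]
  refine ⟨fun x => (x - x₀) * Real.sqrt (SSps Ω x₀ x), hc3g, ?_, ?_, ?_, ?_⟩
  · filter_upwards [hVopen.mem_nhds hx₀V] with x hx
    rcases eq_or_ne x x₀ with rfl|hne
    · simp
    · have hs : x - x₀ ≠ 0 := sub_ne_zero.mpr hne
      have hΩeq : Ω x = (x - x₀)^2 * SSps Ω x₀ x := by
        simp only [SSps, if_neg hne]
        field_simp
      rw [hΩeq, Real.sqrt_mul (sq_nonneg _), Real.sqrt_sq_eq_abs,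
        show Real.sign (x - x₀) * (|x - x₀| * Real.sqrt (SSps Ω x₀ x))
          = (Real.sign (x - x₀) * |x - x₀|) * Real.sqrt (SSps Ω x₀ x) by ring,
        SSsign_mul_abs]
  · rw [hder, hps00, id2, SSalg1 _ h2]
  · rw [hit2, id3, id2, e1, hps00]
    exact SSalg2 _ _ h2
  · rw [hit3, id4, id3, id2, e2, e1, hps00]
    exact SSalg3 _ _ _ h2
end
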